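/- Let P be a finite poset, k a field, and M a persistence module over P. Let f : X → M be an interval cover of M, and write X = X_1 ⊕ ⋯ ⊕ X_m with each X_i an interval module. Then: (1) f is surjective; (2) the restriction of f to each summand X_i is injective; (3) supp(X) = supp(M). In particular, each X_i is isomorphic to an interval submodule of M. -/

import Mathlib

/-!
Surjectivity: for `y ∈ M p`, the morphism `k_{↑p} → M` sending `1` to `y` factors through `f`.

Injectivity on a summand `η : k_S → X` (with retraction `ε`): if `(η ≫ f)_p` is not injective it
is zero, since `k_S(p)` is a line, and then `η ≫ f` vanishes on all of `S ∩ ↑p`. It therefore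
factors as `k_S → ⨁ⱼ k_{Cⱼ} → M`, where the `Cⱼ` are the zigzag components of `S \ ↑p`; the first
map is zero at `p`, and the second factors through `f` because the source is
interval-decomposable. This gives `σ : k_S → X` with `σ ≫ f = η ≫ f` and
`σ_p = 0`. The endomorphism `1 + ε ≫ (σ - η)` of `X` lies over `M`, so it is invertible by right
minimality, which forces `σ ≫ ε` to be split epi, impossible at `p ∈ S`.

The supports agree: `M(p) = 0` kills every summand `X_i(p)` by injectivity, and `X(p) = 0` kills
`M(p)` by surjectivity.
-/

open CategoryTheory CategoryTheory.Limits

attribute [local instance] CategoryTheory.Limits.HasFiniteBiproducts.of_hasFiniteProducts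

section Posets

variable {P : Type} [PartialOrder P]

/-- Zigzag connectivity of two elements of a subset `S` of a poset: they are linked by a
zigzag of comparable pairs inside `S`. -/
def ZigzagConnIn (S : Set P) (a b : S) : Prop :=
  Relation.ReflTransGen (fun u v : S => (u : P) ≤ v ∨ (v : P) ≤ u) a b

/-- A subset of a poset is convex if `x ≤ z ≤ y` with `x, y` in the subset implies `z` is. -/
def IsConvex (S : Set P) : Prop :=
  ∀ ⦃x y z : P⦄, x ∈ S → y ∈ S → x ≤ z → z ≤ y → z ∈ S

/-- An interval of a poset: a nonempty, convex, zigzag-connected subset. -/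
def IsIntervalSet (S : Set P) : Prop :=
  S.Nonempty ∧ IsConvex S ∧ ∀ a b : S, ZigzagConnIn S a b

end Posets

section IntervalModules

variable (k : Type) [Field k] {P : Type} [PartialOrder P]

open Classical in
/-- The linear map between the fibers of the interval module. -/
noncomputable def intervalModuleAux (S : Set P) (p q : P) :
    ↥(if p ∈ S then (⊤ : Submodule k k) else ⊥) →ₗ[k]
      ↥(if q ∈ S then (⊤ : Submodule k k) else ⊥) where
  toFun x := ⟨(if p ∈ S ∧ q ∈ S then (1 : k) else 0) * x.1, by
    by_cases hq : q ∈ S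
    · rw [if_pos hq]; exact Submodule.mem_top
    · simp only [hq, and_false, if_false, zero_mul]; exact Submodule.zero_mem _⟩
  map_add' x y := by ext; simp [mul_add]
  map_smul' c x := by ext; simp

open Classical in
/-- The interval module `k_S` associated to a convex subset `S` of a poset `P`:
it is `k` at points of `S`, `0` elsewhere, with identity structure maps inside `S`. -/
noncomputable def intervalModule (S : Set P) (hS : IsConvex S) : P ⥤ ModuleCat.{0} k where
  obj p := ModuleCat.of k ↥(if p ∈ S then (⊤ : Submodule k k) else ⊥)
  map {p q} _ := ModuleCat.ofHom (intervalModuleAux k S p q)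
  map_id p := by
    ext1
    apply LinearMap.ext
    rintro ⟨x, hx⟩
    apply Subtype.ext
    show (if p ∈ S ∧ p ∈ S then (1 : k) else 0) * x = x
    by_cases hp : p ∈ S
    · simp [hp]
    · rw [if_neg hp] at hx
      simp [hp, (Submodule.mem_bot k).mp hx]
  map_comp {p q r} f g := by
    ext1
    apply LinearMap.ext
    rintro ⟨x, hx⟩
    apply Subtype.ext
    show (if p ∈ S ∧ r ∈ S then (1 : k) else 0) * x
      = (if q ∈ S ∧ r ∈ S then (1 : k) else 0) * ((if p ∈ S ∧ q ∈ S then (1 : k) else 0) * x)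
    by_cases hp : p ∈ S
    · by_cases hr : r ∈ S
      · have hq : q ∈ S := hS hp hr (leOfHom f) (leOfHom g)
        simp [hp, hq, hr]
      · simp [hr]
    · rw [if_neg hp] at hx
      simp [(Submodule.mem_bot k).mp hx]

/-- A persistence module is an interval module if it is isomorphic to `k_S` for some
interval `S`. -/
def IsIntervalModule (M : P ⥤ ModuleCat.{0} k) : Prop :=
  ∃ (S : Set P) (hS : IsIntervalSet S), Nonempty (M ≅ intervalModule k S hS.2.1)

/-- A persistence module is interval-decomposable if it is isomorphic to a finite direct sum
of interval modules. -/
def IsIntervalDecomposable (M : P ⥤ ModuleCat.{0} k) : Prop :=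
  ∃ (n : ℕ) (J : Fin n → (P ⥤ ModuleCat.{0} k)),
    (∀ i, IsIntervalModule k (J i)) ∧ Nonempty (M ≅ ⨁ J)

/-- The support of a persistence module. -/
def moduleSupport (M : P ⥤ ModuleCat.{0} k) : Set P := {p : P | ¬ IsZero (M.obj p)}

/-- A persistence module valued in finite-dimensional vector spaces. -/
def PointwiseFinite (M : P ⥤ ModuleCat.{0} k) : Prop :=
  ∀ p : P, FiniteDimensional k (M.obj p)

end IntervalModules

section Approximations

variable {C : Type*} [Category C]

/-- `f : X ⟶ M` is a right `𝒳`-approximation of `M` if `X ∈ 𝒳` and every morphism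
from an object of `𝒳` to `M` factors through `f`. -/
def IsRightApproximation (𝒳 : C → Prop) {X M : C} (f : X ⟶ M) : Prop :=
  𝒳 X ∧ ∀ ⦃Y : C⦄ (g : Y ⟶ M), 𝒳 Y → ∃ h : Y ⟶ X, h ≫ f = g

/-- `f : X ⟶ M` is right minimal if every endomorphism `g` of `X` with `f ∘ g = f`
is an isomorphism. -/
def IsRightMinimal {X M : C} (f : X ⟶ M) : Prop :=
  ∀ g : X ⟶ X, g ≫ f = f → IsIso g

end Approximations

/-- An interval cover: a right minimal approximation by interval-decomposable modules. -/
def IsIntervalCover (k : Type) [Field k] {P : Type} [PartialOrder P]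
    {X M : P ⥤ ModuleCat.{0} k} (f : X ⟶ M) : Prop :=
  IsRightApproximation (IsIntervalDecomposable k) f ∧ IsRightMinimal f

section Resolutions

variable {C : Type*} [Category C] [Limits.HasZeroMorphisms C]

/-- `M` admits a resolution `0 ⟶ J_n ⟶ ⋯ ⟶ J_1 ⟶ J_0 ⟶ M ⟶ 0` of length `n` by objects
of `𝒳`: an exact sequence in which every `J_i` lies in `𝒳`.  (The data is encoded by an
`ℕ`-indexed complex which vanishes in degrees `> n` and is exact everywhere.) -/
def HasResolutionOfLength (𝒳 : C → Prop) (n : ℕ) (M : C) : Prop :=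
  ∃ (J : ℕ → C) (d : ∀ i, J (i + 1) ⟶ J i) (f : J 0 ⟶ M) (w0 : d 0 ≫ f = 0)
    (w : ∀ i, d (i + 1) ≫ d i = 0),
    (∀ i, i ≤ n → 𝒳 (J i)) ∧ (∀ i, n < i → IsZero (J i)) ∧
    Epi f ∧ (ShortComplex.mk (d 0) f w0).Exact ∧
    ∀ i, (ShortComplex.mk (d (i + 1)) (d i) (w i)).Exact

end Resolutions

section Components

variable {P : Type} [PartialOrder P]

lemma ZigzagConnIn.of_subset {C T : Set P} (hCT : C ⊆ T)
    (hC : ∀ ⦃q r : P⦄, q ∈ C → r ∈ T → (q ≤ r ∨ r ≤ q) → r ∈ C) {a b : C}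
    (h : ZigzagConnIn T ⟨a, hCT a.2⟩ ⟨b, hCT b.2⟩) : ZigzagConnIn C a b := by
  suffices ∀ v : T, ZigzagConnIn T ⟨a, hCT a.2⟩ v →
      ∃ hv : (v : P) ∈ C, ZigzagConnIn C a ⟨v, hv⟩ from (this _ h).2
  intro v hv
  induction hv with
  | refl => exact ⟨a.2, .refl⟩
  | tail _ huv ih =>
    obtain ⟨hu, hau⟩ := ih
    exact ⟨hC hu (Subtype.prop _) huv, hau.tail huv⟩

def zigzagSetoid (T : Set P) : Setoid T where
  r := ZigzagConnIn T
  iseqv := ⟨fun _ => .refl,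
    fun h => Relation.ReflTransGen.mono (fun _ _ => Or.symm) _ _ (Relation.reflTransGen_swap.mpr h),
    .trans⟩

def zigzagComponent (T : Set P) (c : Quotient (zigzagSetoid T)) : Set P :=
  {x | ∃ hx : x ∈ T, ⟦(⟨x, hx⟩ : T)⟧ = c}

lemma zigzagComponent_subset (T : Set P) (c : Quotient (zigzagSetoid T)) :
    zigzagComponent T c ⊆ T :=
  fun _ hx => hx.1

lemma mem_zigzagComponent_iff {T : Set P} {c : Quotient (zigzagSetoid T)} {x : P} (hx : x ∈ T) :
    x ∈ zigzagComponent T c ↔ ⟦(⟨x, hx⟩ : T)⟧ = c :=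
  ⟨fun ⟨_, h⟩ => h, fun h => ⟨hx, h⟩⟩

lemma mem_zigzagComponent_iff_of_comparable {T : Set P} (c : Quotient (zigzagSetoid T))
    {q r : P} (hq : q ∈ T) (hr : r ∈ T) (hqr : q ≤ r ∨ r ≤ q) :
    q ∈ zigzagComponent T c ↔ r ∈ zigzagComponent T c := by
  rw [mem_zigzagComponent_iff hq, mem_zigzagComponent_iff hr,
    Quotient.sound (show ZigzagConnIn T ⟨q, hq⟩ ⟨r, hr⟩ from .single hqr)]

lemma isIntervalSet_zigzagComponent {T : Set P} (hT : IsConvex T) (c : Quotient (zigzagSetoid T)) :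
    IsIntervalSet (zigzagComponent T c) := by
  have hsub := zigzagComponent_subset T c
  have hclosed : ∀ ⦃q r : P⦄, q ∈ zigzagComponent T c → r ∈ T → (q ≤ r ∨ r ≤ q) →
      r ∈ zigzagComponent T c :=
    fun q r hq hr hqr => (mem_zigzagComponent_iff_of_comparable c (hsub hq) hr hqr).mp hq
  refine ⟨?_, fun x y z hx hy hxz _ => ?_, fun a b => ZigzagConnIn.of_subset hsub hclosed ?_⟩
  · obtain ⟨⟨x, hx⟩, rfl⟩ := Quotient.exists_rep c
    exact ⟨x, hx, rfl⟩
  · exact hclosed hx (hT (hsub hx) (hsub hy) hxz ‹_›) (Or.inl hxz)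
  · exact Quotient.exact (s := zigzagSetoid T) (((mem_zigzagComponent_iff (hsub a.2)).mp a.2).trans
      ((mem_zigzagComponent_iff (hsub b.2)).mp b.2).symm)

lemma exists_intervalSet_partition [Finite P] {T : Set P} (hT : IsConvex T) :
    ∃ (n : ℕ) (C : Fin n → Set P), (∀ j, IsIntervalSet (C j)) ∧ (∀ j, C j ⊆ T) ∧
      (∀ q ∈ T, ∃! j, q ∈ C j) ∧
      (∀ j ⦃q r : P⦄, q ∈ T → r ∈ T → q ≤ r → (q ∈ C j ↔ r ∈ C j)) := by
  let e := Finite.equivFin (Quotient (zigzagSetoid T))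
  refine ⟨_, fun j => zigzagComponent T (e.symm j),
    fun j => isIntervalSet_zigzagComponent hT _, fun j => zigzagComponent_subset T _,
    fun q hq => ⟨e ⟦⟨q, hq⟩⟧, ?_, fun j hj => ?_⟩,
    fun j q r hq hr hqr => mem_zigzagComponent_iff_of_comparable _ hq hr (Or.inl hqr)⟩
  · exact (mem_zigzagComponent_iff hq).mpr (e.symm_apply_apply _).symm
  · rw [(mem_zigzagComponent_iff hq).mp hj, e.apply_symm_apply]

end Components

namespace intervalModule

open Classical

variable {k : Type} [Field k] {P : Type} [PartialOrder P] {S : Set P} {hS : IsConvex S}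

def one {q : P} (hq : q ∈ S) : (intervalModule k S hS).obj q :=
  ⟨1, by rw [if_pos hq]; trivial⟩

lemma val_eq_zero {q : P} (hq : q ∉ S) (x : (intervalModule k S hS).obj q) : x.1 = 0 := by
  simpa only [if_neg hq, Submodule.mem_bot] using x.2

lemma val_map {q r : P} (g : q ⟶ r) (x : (intervalModule k S hS).obj q) :
    ((intervalModule k S hS).map g x).1 = (if q ∈ S ∧ r ∈ S then 1 else 0) * x.1 :=
  rfl

lemma subsingleton_obj {q : P} (hq : q ∉ S) : Subsingleton ((intervalModule k S hS).obj q) :=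
  ⟨fun x y => Subtype.ext ((val_eq_zero hq x).trans (val_eq_zero hq y).symm)⟩

lemma isZero_obj {q : P} (hq : q ∉ S) : IsZero ((intervalModule k S hS).obj q) :=
  ModuleCat.isZero_iff_subsingleton.mpr (subsingleton_obj hq)

lemma not_isZero_obj {q : P} (hq : q ∈ S) : ¬ IsZero ((intervalModule k S hS).obj q) := by
  intro h
  have h10 : (1 : k) = 0 :=
    congrArg Subtype.val ((ModuleCat.isZero_iff_subsingleton.mp h).elim (one hq) 0)
  exact one_ne_zero h10

lemma eq_smul_one {q : P} (hq : q ∈ S) (x : (intervalModule k S hS).obj q) :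
    x = x.1 • one hq :=
  Subtype.ext (mul_one x.1).symm

lemma map_one {q r : P} (g : q ⟶ r) (hq : q ∈ S) (hr : r ∈ S) :
    (intervalModule k S hS).map g (one hq) = one hr :=
  Subtype.ext ((val_map g _).trans (by simp [one, hq, hr]))

variable {M : P ⥤ ModuleCat.{0} k}

lemma hom_ext {φ ψ : intervalModule k S hS ⟶ M}
    (h : ∀ q (hq : q ∈ S), φ.app q (one hq) = ψ.app q (one hq)) : φ = ψ := by
  ext q x
  by_cases hq : q ∈ S
  · rw [eq_smul_one hq x, map_smul, map_smul, h q hq]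
  · rw [(isZero_obj hq).eq_of_src (φ.app q) (ψ.app q)]

noncomputable def homMk (v : ∀ q, M.obj q) (hv : ∀ q, q ∉ S → v q = 0)
    (hmap : ∀ q r (g : q ⟶ r), q ∈ S → M.map g (v q) = v r) :
    intervalModule k S hS ⟶ M where
  app q := ModuleCat.ofHom
    { toFun := fun x => x.1 • v q
      map_add' := fun x y => add_smul _ _ _
      map_smul' := fun c x => mul_smul _ _ _ }
  naturality {q r} g := by
    ext x
    change ((intervalModule k S hS).map g x).1 • v r = M.map g (x.1 • v q)
    rw [val_map, map_smul]
    by_cases hq : q ∈ S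
    · by_cases hr : r ∈ S
      · rw [if_pos ⟨hq, hr⟩, one_mul, hmap q r g hq]
      · rw [if_neg (fun h => hr h.2), zero_mul, zero_smul, hmap q r g hq, hv r hr, smul_zero]
    · rw [val_eq_zero hq x, mul_zero, zero_smul, zero_smul]

lemma homMk_app_one (v : ∀ q, M.obj q) (hv : ∀ q, q ∉ S → v q = 0)
    (hmap : ∀ q r (g : q ⟶ r), q ∈ S → M.map g (v q) = v r) {q : P} (hq : q ∈ S) :
    (homMk (hS := hS) v hv hmap).app q (one hq) = v q :=
  one_smul k (v q)

lemma app_one_eq_zero_of_not_injective (φ : intervalModule k S hS ⟶ M) {q : P} (hq : q ∈ S)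
    (h : ¬ Function.Injective (φ.app q)) : φ.app q (one hq) = 0 := by
  contrapose! h
  intro a b hab
  rw [eq_smul_one hq a, eq_smul_one hq b, map_smul, map_smul] at hab
  exact Subtype.ext (smul_left_injective k h hab)

lemma app_one_eq_zero_of_le (φ : intervalModule k S hS ⟶ M) {p r : P} (hpr : p ≤ r)
    (hp : p ∈ S) (hr : r ∈ S) (hφ : φ.app p (one hp) = 0) : φ.app r (one hr) = 0 := by
  rw [← map_one (homOfLE hpr) hp hr, NatTrans.naturality_apply, hφ, map_zero]

variable {C : Set P} {hC : IsConvex C}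

noncomputable def proj (hCS : C ⊆ S) (hdown : ∀ ⦃q r : P⦄, q ≤ r → q ∈ S → r ∈ C → q ∈ C) :
    intervalModule k S hS ⟶ intervalModule k C hC :=
  homMk (fun q => if h : q ∈ C then one h else 0) (fun q hq => dif_neg fun h => hq (hCS h))
    fun q r g hq => by
    by_cases hqC : q ∈ C
    · by_cases hrC : r ∈ C
      · rw [dif_pos hqC, dif_pos hrC, map_one]
      · exact (subsingleton_obj hrC).elim _ _
    · have hrC : r ∉ C := fun hr => hqC (hdown (leOfHom g) hq hr)
      rw [dif_neg hqC, dif_neg hrC, map_zero]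

lemma proj_app_one (hCS : C ⊆ S) (hdown : ∀ ⦃q r : P⦄, q ≤ r → q ∈ S → r ∈ C → q ∈ C)
    {q : P} (hq : q ∈ S) (hqC : q ∈ C) :
    (proj (k := k) (hS := hS) (hC := hC) hCS hdown).app q (one hq) = one hqC := by
  rw [proj, homMk_app_one, dif_pos hqC]

noncomputable def restrict (φ : intervalModule k S hS ⟶ M) (hCS : C ⊆ S)
    (hvan : ∀ ⦃q r : P⦄, q ≤ r → q ∈ C → (hr : r ∈ S) → r ∉ C → φ.app r (one hr) = 0) :
    intervalModule k C hC ⟶ M :=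
  homMk (fun q => if h : q ∈ C then φ.app q (one (hCS h)) else 0) (fun q hq => dif_neg hq)
    fun q r g hq => by
      rw [dif_pos hq, ← NatTrans.naturality_apply]
      by_cases hrC : r ∈ C
      · rw [dif_pos hrC, map_one]
      · rw [dif_neg hrC]
        by_cases hrS : r ∈ S
        · rw [map_one g _ hrS]
          exact hvan (leOfHom g) hq hrS hrC
        · have h0 : (intervalModule k S hS).map g (one (hCS hq)) = 0 :=
            (subsingleton_obj hrS).elim _ _
          rw [h0, map_zero]

lemma restrict_app_one (φ : intervalModule k S hS ⟶ M) (hCS : C ⊆ S)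
    (hvan : ∀ ⦃q r : P⦄, q ≤ r → q ∈ C → (hr : r ∈ S) → r ∉ C → φ.app r (one hr) = 0)
    {q : P} (hq : q ∈ C) :
    (restrict (hC := hC) φ hCS hvan).app q (one hq) = φ.app q (one (hCS hq)) := by
  rw [restrict, homMk_app_one, dif_pos hq]

lemma exists_factorization_of_app_one_eq_zero [Finite P] (φ : intervalModule k S hS ⟶ M)
    {p : P} (hp : p ∈ S) (hφ : φ.app p (one hp) = 0) :
    ∃ (Y : P ⥤ ModuleCat.{0} k) (ρ : intervalModule k S hS ⟶ Y) (ψ : Y ⟶ M),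
      IsIntervalDecomposable k Y ∧ ρ ≫ ψ = φ ∧ ρ.app p = 0 := by
  let T : Set P := {q | q ∈ S ∧ ¬ p ≤ q}
  have hT : IsConvex T := fun x y z hx hy hxz hzy =>
    ⟨hS hx.1 hy.1 hxz hzy, fun hpz => hy.2 (hpz.trans hzy)⟩
  have hφT : ∀ q (hq : q ∈ S), q ∉ T → φ.app q (one hq) = 0 := fun q hq hqT =>
    app_one_eq_zero_of_le φ (not_not.mp fun h => hqT ⟨hq, h⟩) hp hq hφ
  obtain ⟨n, C, hC, hCT, hcover, hCcomp⟩ := exists_intervalSet_partition hT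
  have hCS : ∀ j, C j ⊆ S := fun j _ hq => (hCT j hq).1
  have hdown : ∀ j ⦃q r : P⦄, q ≤ r → q ∈ S → r ∈ C j → q ∈ C j := fun j q r hqr hq hr =>
    (hCcomp j ⟨hq, fun h => (hCT j hr).2 (h.trans hqr)⟩ (hCT j hr) hqr).mpr hr
  have hvan : ∀ j ⦃q r : P⦄, q ≤ r → q ∈ C j → (hr : r ∈ S) → r ∉ C j →
      φ.app r (one hr) = 0 := fun j q r hqr hq hr hrC =>
    hφT r hr fun hrT => hrC ((hCcomp j (hCT j hq) hrT hqr).mp hq)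
  let J : Fin n → P ⥤ ModuleCat.{0} k := fun j => intervalModule k (C j) (hC j).2.1
  let ρ : ∀ j, intervalModule k S hS ⟶ J j := fun j => proj (hCS j) (hdown j)
  let ψ : ∀ j, J j ⟶ M := fun j => restrict φ (hCS j) (hvan j)
  have hρ0 : ∀ j {q : P}, q ∉ C j → (ρ j).app q = 0 := fun j q hq =>
    (isZero_obj hq).eq_zero_of_tgt _
  have hterm : ∀ j {q : P} (hq : q ∈ S),
      (ρ j ≫ ψ j).app q (one hq) = if q ∈ C j then φ.app q (one hq) else 0 := by
    intro j q hq
    by_cases hqC : q ∈ C j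
    · rw [if_pos hqC, NatTrans.comp_app, ModuleCat.comp_apply, proj_app_one _ _ hq hqC,
        restrict_app_one]
    · rw [if_neg hqC, NatTrans.comp_app, hρ0 j hqC, zero_comp]
      rfl
  refine ⟨⨁ J, biproduct.lift ρ, biproduct.desc ψ,
    ⟨n, J, fun j => ⟨C j, hC j, ⟨Iso.refl _⟩⟩, ⟨Iso.refl _⟩⟩, ?_, ?_⟩
  · rw [biproduct.lift_desc]
    refine hom_ext fun q hq => ?_
    simp only [NatTrans.app_sum, ModuleCat.hom_sum, LinearMap.sum_apply]
    rw [Finset.sum_congr rfl fun j _ => hterm j hq]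
    by_cases hqT : q ∈ T
    · obtain ⟨j, hj, huniq⟩ := hcover q hqT
      rw [Finset.sum_eq_single j (fun i _ hi => if_neg fun h => hi (huniq i h)) (by simp),
        if_pos hj]
    · rw [hφT q hq hqT]
      exact Finset.sum_eq_zero fun j _ => if_neg fun h => hqT (hCT j h)
  · rw [biproduct.lift_eq, NatTrans.app_sum]
    refine Finset.sum_eq_zero fun j _ => ?_
    rw [NatTrans.comp_app, hρ0 j fun hp' => (hCT j hp').2 le_rfl, zero_comp]

end intervalModule

section Minimality

variable {C : Type*} [Category C] [Preadditive C]

lemma IsRightMinimal.isSplitEpi_comp {X M A : C} {f : X ⟶ M} (hf : IsRightMinimal f)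
    {η : A ⟶ X} {ε : X ⟶ A} (hηε : η ≫ ε = 𝟙 A) {σ : A ⟶ X} (hσ : σ ≫ f = η ≫ f) :
    IsSplitEpi (σ ≫ ε) := by
  -- `g` trades the summand inclusion `η` for `σ`, so it still lies over `M`.
  let g : X ⟶ X := 𝟙 X + ε ≫ (σ - η)
  have hg : IsIso g := hf g (by simp [g, hσ])
  have hgε : g ≫ ε = ε ≫ σ ≫ ε := by simp [g, hηε]
  refine IsSplitEpi.mk' ⟨η ≫ inv g ≫ ε, ?_⟩
  rw [Category.assoc, Category.assoc, ← hgε, IsIso.inv_hom_id_assoc, hηε]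

end Minimality

lemma isZero_biproduct_obj {C D : Type*} [Category C] [Category D] [Preadditive D]
    {ι : Type} [Fintype ι] {F : ι → C ⥤ D} [HasBiproduct F] {c : C}
    (h : ∀ j, IsZero ((F j).obj c)) : IsZero ((⨁ F).obj c) := by
  rw [IsZero.iff_id_eq_zero, ← NatTrans.id_app, ← biproduct.total, NatTrans.app_sum]
  refine Finset.sum_eq_zero fun j _ => ?_
  rw [NatTrans.comp_app, (h j).eq_zero_of_tgt ((biproduct.π F j).app c), zero_comp]

section IntervalCover

variable {k : Type} [Field k] {P : Type} [PartialOrder P] {X M : P ⥤ ModuleCat.{0} k}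
  {f : X ⟶ M}

lemma IsIntervalModule.isIntervalDecomposable {N : P ⥤ ModuleCat.{0} k}
    (h : IsIntervalModule k N) : IsIntervalDecomposable k N :=
  ⟨1, fun _ => N, fun _ => h, ⟨(biproductUniqueIso fun _ : Fin 1 => N).symm⟩⟩

lemma isIntervalSet_Ici (p : P) : IsIntervalSet (Set.Ici p) :=
  ⟨⟨p, le_rfl⟩, fun _ _ _ hx _ hxz _ => le_trans hx hxz,
    fun a b => show ZigzagConnIn _ a b from
      .tail (b := ⟨p, le_rfl⟩) (.single (Or.inr (show p ≤ (a : P) from a.2)))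
        (Or.inl (show p ≤ (b : P) from b.2))⟩

open Classical in
lemma IsIntervalCover.surjective_app (hf : IsIntervalCover k f) (p : P) :
    Function.Surjective (f.app p) := by
  intro y
  let φ : intervalModule k (Set.Ici p) (isIntervalSet_Ici p).2.1 ⟶ M :=
    intervalModule.homMk (fun q => if h : p ≤ q then M.map (homOfLE h) y else 0)
      (fun q hq => dif_neg hq) fun q r g hq => by
        rw [dif_pos (show p ≤ q from hq), dif_pos (le_trans hq (leOfHom g)),
          ← ConcreteCategory.comp_apply, ← M.map_comp]
        rfl
  obtain ⟨h, hh⟩ := hf.1.2 φ (IsIntervalModule.isIntervalDecomposable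
    ⟨_, isIntervalSet_Ici p, ⟨Iso.refl _⟩⟩)
  refine ⟨h.app p (intervalModule.one (Set.mem_Ici.mpr le_rfl)), ?_⟩
  rw [← ConcreteCategory.comp_apply, ← NatTrans.comp_app, hh]
  refine (intervalModule.homMk_app_one _ _ _ _).trans ?_
  rw [dif_pos le_rfl, show homOfLE (le_refl p) = 𝟙 p from rfl, M.map_id]
  rfl

lemma IsIntervalCover.injective_app_of_retract [Finite P] (hf : IsIntervalCover k f)
    {A : P ⥤ ModuleCat.{0} k} (hA : IsIntervalModule k A) {η : A ⟶ X} {ε : X ⟶ A}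
    (hηε : η ≫ ε = 𝟙 A) (p : P) : Function.Injective ((η ≫ f).app p) := by
  obtain ⟨S, hS, ⟨u⟩⟩ := hA
  let φ := u.inv ≫ η ≫ f
  by_contra hinj
  have hφ : ¬ Function.Injective (φ.app p) := fun h => hinj (by
    rw [show (η ≫ f).app p = u.hom.app p ≫ φ.app p by simp [φ]]
    exact fun a b hab => (u.app p).toLinearEquiv.injective (h hab))
  have hp : p ∈ S := by
    by_contra hp
    have := intervalModule.subsingleton_obj (k := k) (hS := hS.2.1) hp
    exact hφ fun a b _ => Subsingleton.elim a b
  obtain ⟨Y, ρ, ψ, hY, hρψ, hρp⟩ := intervalModule.exists_factorization_of_app_one_eq_zero φ hp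
    (intervalModule.app_one_eq_zero_of_not_injective φ hp hφ)
  obtain ⟨h, hh⟩ := hf.1.2 ψ hY
  have := hf.2.isSplitEpi_comp hηε (σ := u.hom ≫ ρ ≫ h) (by simp [hh, hρψ, φ])
  have hid := congrArg (fun g => g.app p) (IsSplitEpi.id ((u.hom ≫ ρ ≫ h) ≫ ε))
  simp only [NatTrans.comp_app, Category.assoc, hρp, zero_comp, comp_zero, NatTrans.id_app] at hid
  exact intervalModule.not_isZero_obj (k := k) (hS := hS.2.1) hp
    (((IsZero.iff_id_eq_zero _).mpr hid.symm).of_iso (u.app p).symm)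

end IntervalCover

theorem intervalCover_summand_injective_general
    (k : Type) [Field k] (P : Type) [PartialOrder P] [Finite P]
    (M X : P ⥤ ModuleCat.{0} k)
    (f : X ⟶ M) (hf : IsIntervalCover k f)
    (m : ℕ) (Xs : Fin m → (P ⥤ ModuleCat.{0} k))
    (hXs : ∀ i, IsIntervalModule k (Xs i)) (e : X ≅ ⨁ Xs) :
    (∀ p : P, Function.Surjective (f.app p)) ∧
    (∀ (i : Fin m) (p : P), Function.Injective ((biproduct.ι Xs i ≫ e.inv ≫ f).app p)) ∧
    moduleSupport k X = moduleSupport k M ∧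
    (∀ i : Fin m, ∃ (N : P ⥤ ModuleCat.{0} k) (ιN : N ⟶ M),
      IsIntervalModule k N ∧ Mono ιN ∧ Nonempty (Xs i ≅ N)) := by
  have inj : ∀ i p, Function.Injective ((biproduct.ι Xs i ≫ e.inv ≫ f).app p) := fun i p => by
    simpa only [Category.assoc] using
      hf.injective_app_of_retract (hXs i) (η := biproduct.ι Xs i ≫ e.inv)
        (ε := e.hom ≫ biproduct.π Xs i) (by simp) p
  have hmono : ∀ i p, Mono ((biproduct.ι Xs i ≫ e.inv ≫ f).app p) := fun i p =>
    (ModuleCat.mono_iff_injective _).mpr (inj i p)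
  refine ⟨hf.surjective_app, inj, ?_, fun i => ⟨Xs i, biproduct.ι Xs i ≫ e.inv ≫ f, hXs i,
    NatTrans.mono_of_mono_app _, ⟨Iso.refl _⟩⟩⟩
  ext p
  refine not_congr ⟨fun hX => ?_, fun hM => ?_⟩
  · have := (ModuleCat.epi_iff_surjective (f.app p)).mpr (hf.surjective_app p)
    exact hX.of_epi (f.app p)
  · exact (isZero_biproduct_obj fun i => hM.of_mono ((biproduct.ι Xs i ≫ e.inv ≫ f).app p)).of_iso
      (e.app p)

/-- Properties of interval covers: surjectivity, summand-injectivity,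
equality of supports, and each summand is (isomorphic to) an interval submodule of `M`. -/
theorem intervalCover_summand_injective
    (k : Type) [Field k] (P : Type) [PartialOrder P] [Finite P]
    (M X : P ⥤ ModuleCat.{0} k) (hM : PointwiseFinite k M)
    (f : X ⟶ M) (hf : IsIntervalCover k f)
    (m : ℕ) (Xs : Fin m → (P ⥤ ModuleCat.{0} k))
    (hXs : ∀ i, IsIntervalModule k (Xs i)) (e : X ≅ ⨁ Xs) :
    (∀ p : P, Function.Surjective (f.app p)) ∧
    (∀ (i : Fin m) (p : P), Function.Injective ((biproduct.ι Xs i ≫ e.inv ≫ f).app p)) ∧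
    moduleSupport k X = moduleSupport k M ∧
    (∀ i : Fin m, ∃ (N : P ⥤ ModuleCat.{0} k) (ιN : N ⟶ M),
      IsIntervalModule k N ∧ Mono ιN ∧ Nonempty (Xs i ≅ N)) :=
  intervalCover_summand_injective_general k P M X f hf m Xs hXs e
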